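/- Unrolled consensus-error bound: Let W ∈ ℝ^{m×m} be symmetric and doubly stochastic with η := ‖W − (1/m)𝟏𝟏ᵀ‖ (spectral norm), and let {x^k} ⊂ ℝ^{md} evolve by x^{k+1} = (W ⊗ I_d)(x^k − λ^k u^k) for sequences λ^k ≥ 0 and u^k ∈ ℝ^{md}, with averages x̄^k := (1/m)Σ_{i=1}^m x_i^k. Then for every k ≥ 0, ‖x^{k+1} − x̄^{k+1} ⊗ 𝟏‖ ≤ η^{k+1} ‖x^0 − x̄^0 ⊗ 𝟏‖ + Σ_{l=0}^{k} η^{k+1−l} λ^l ‖u^l‖. -/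

import Mathlib

/-!
Since `W` has unit row and column sums, the consensus error `e^k = x^k - x̄^k ⊗ 𝟏` obeys
`e^{k+1} = (M ⊗ I_d)(e^k - λ^k u^k)` with `M = W - 𝟏𝟏ᵀ/m`, and `M ⊗ I_d` is bounded by
`‖M‖ = η` because it acts as `M` on each coordinate column.
Hence `‖e^{k+1}‖ ≤ η (‖e^k‖ + λ^k ‖u^k‖)`, and unrolling this linear recursion gives the bound.
-/

open scoped Matrix

/-- The Euclidean norm of the stacked vector `(y 1, …, y m) ∈ ℝ^{md}`. -/
noncomputable def stackedNorm {m d : ℕ} (y : Fin m → EuclideanSpace ℝ (Fin d)) : ℝ :=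
  Real.sqrt (∑ i, ‖y i‖ ^ 2)

open Finset

lemma sum_smul_sub_const_of_sum_eq_zero {R ι E : Type*} [Ring R] [AddCommGroup E]
    [Module R E] {s : Finset ι} {f : ι → R} (hf : ∑ j ∈ s, f j = 0) (z : ι → E) (c : E) :
    ∑ j ∈ s, f j • (z j - c) = ∑ j ∈ s, f j • z j := by
  simp only [smul_sub, sum_sub_distrib, ← sum_smul, hf, zero_smul, sub_zero]

section StackedNorm

variable {m d : ℕ}

lemma stackedNorm_eq_norm_toLp (y : Fin m → EuclideanSpace ℝ (Fin d)) :
    stackedNorm y = ‖WithLp.toLp 2 y‖ :=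
  (PiLp.norm_eq_of_L2 _).symm

lemma stackedNorm_sub_le (a b : Fin m → EuclideanSpace ℝ (Fin d)) :
    stackedNorm (a - b) ≤ stackedNorm a + stackedNorm b := by
  simpa only [stackedNorm_eq_norm_toLp, WithLp.toLp_sub] using
    norm_sub_le (WithLp.toLp 2 a) (WithLp.toLp 2 b)

lemma stackedNorm_smul (c : ℝ) (a : Fin m → EuclideanSpace ℝ (Fin d)) :
    stackedNorm (c • a) = |c| * stackedNorm a := by
  simpa only [stackedNorm_eq_norm_toLp, WithLp.toLp_smul, Real.norm_eq_abs] using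
    norm_smul c (WithLp.toLp 2 a)

lemma sq_stackedNorm_eq_sum_column (y : Fin m → EuclideanSpace ℝ (Fin d)) :
    stackedNorm y ^ 2
      = ∑ t, ‖(WithLp.toLp 2 fun j => y j t : EuclideanSpace ℝ (Fin m))‖ ^ 2 := by
  rw [stackedNorm, Real.sq_sqrt (by positivity)]
  simp only [EuclideanSpace.norm_sq_eq]
  exact sum_comm

/-- `M ⊗ I_d` acts as `M` on each of the `d` coordinate columns of the stacked vector, so the
operator bound of `M` applies column by column. -/
lemma stackedNorm_matrix_smul_le (M : Matrix (Fin m) (Fin m) ℝ)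
    (y : Fin m → EuclideanSpace ℝ (Fin d)) :
    stackedNorm (fun i => ∑ j, M i j • y j)
      ≤ ‖Matrix.toEuclideanCLM (𝕜 := ℝ) (n := Fin m) M‖ * stackedNorm y := by
  set C := ‖Matrix.toEuclideanCLM (𝕜 := ℝ) (n := Fin m) M‖
  have hcolumn : ∀ t, (WithLp.toLp 2 fun i => (∑ j, M i j • y j) t : EuclideanSpace ℝ (Fin m))
      = Matrix.toEuclideanCLM (𝕜 := ℝ) M (WithLp.toLp 2 fun j => y j t) := by
    intro t
    rw [Matrix.toEuclideanCLM_toLp]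
    congr 1
    ext i
    simp [Matrix.mulVec, dotProduct]
  have hsq : stackedNorm (fun i => ∑ j, M i j • y j) ^ 2 ≤ (C * stackedNorm y) ^ 2 := by
    rw [mul_pow, sq_stackedNorm_eq_sum_column, sq_stackedNorm_eq_sum_column, mul_sum]
    refine sum_le_sum fun t _ => ?_
    rw [hcolumn, ← mul_pow]
    exact pow_le_pow_left₀ (norm_nonneg _)
      ((Matrix.toEuclideanCLM (𝕜 := ℝ) (n := Fin m) M).le_opNorm _) 2
  exact (pow_le_pow_iff_left₀ (Real.sqrt_nonneg _)
    (mul_nonneg (norm_nonneg _) (Real.sqrt_nonneg _)) two_ne_zero).mp hsq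

end StackedNorm

section Consensus

variable {m : ℕ} {E : Type*} [AddCommGroup E] [Module ℝ E]

/-- `x - x̄ ⊗ 𝟏` in the paper's notation. -/
noncomputable def consensusError (x : Fin m → E) : Fin m → E :=
  fun i => x i - (m : ℝ)⁻¹ • ∑ i', x i'

lemma sum_sub_centering_eq_zero {W : Matrix (Fin m) (Fin m) ℝ}
    (hrow : W *ᵥ (fun _ => (1 : ℝ)) = fun _ => 1) (hm : m ≠ 0) (i : Fin m) :
    ∑ j, (W - (m : ℝ)⁻¹ • Matrix.of (fun _ _ => (1 : ℝ)) : Matrix (Fin m) (Fin m) ℝ) i j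
      = 0 := by
  have hWi : ∑ j, W i j = 1 := by simpa [Matrix.mulVec, dotProduct] using congrFun hrow i
  simp [sum_sub_distrib, hWi, hm]

/-- Unit column sums make `W ⊗ I_d` preserve the average of the blocks. -/
lemma consensusError_matrix_smul {W : Matrix (Fin m) (Fin m) ℝ}
    (hcol : (fun _ => (1 : ℝ)) ᵥ* W = fun _ => 1) (z : Fin m → E) :
    consensusError (fun i => ∑ j, W i j • z j)
      = fun i => ∑ j,
          (W - (m : ℝ)⁻¹ • Matrix.of (fun _ _ => (1 : ℝ)) : Matrix (Fin m) (Fin m) ℝ) i j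
            • z j := by
  have hWj : ∀ j, ∑ i, W i j = 1 := fun j => by
    simpa [Matrix.vecMul, dotProduct] using congrFun hcol j
  funext i
  simp only [consensusError, Matrix.sub_apply, Matrix.smul_apply, Matrix.of_apply, smul_eq_mul,
    mul_one, sub_smul, sum_sub_distrib, ← smul_sum]
  rw [sum_comm]
  simp only [← sum_smul, hWj, one_smul]

end Consensus

lemma le_pow_mul_add_sum_of_le_mul_add {R : Type*} [CommSemiring R] [PartialOrder R]
    [IsOrderedRing R] {η : R} {a b : ℕ → R} (hη : 0 ≤ η)
    (h : ∀ k, a (k + 1) ≤ η * (a k + b k)) (n : ℕ) :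
    a n ≤ η ^ n * a 0 + ∑ l ∈ range n, η ^ (n - l) * b l := by
  induction n with
  | zero => simp
  | succ n ih =>
    have hsum : ∑ l ∈ range (n + 1), η ^ (n + 1 - l) * b l
        = η * (∑ l ∈ range n, η ^ (n - l) * b l + b n) := by
      rw [sum_range_succ, Nat.add_sub_cancel_left, pow_one, mul_add, mul_sum, mul_comm η]
      congr 1
      refine sum_congr rfl fun l hl => ?_
      rw [Nat.sub_add_comm (mem_range.mp hl).le, pow_succ]
      ring
    calc a (n + 1) ≤ η * (a n + b n) := h n
      _ ≤ η * (η ^ n * a 0 + ∑ l ∈ range n, η ^ (n - l) * b l + b n) := by gcongr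
      _ = η ^ (n + 1) * a 0 + ∑ l ∈ range (n + 1), η ^ (n + 1 - l) * b l := by
        rw [hsum]; ring

lemma stackedNorm_consensusError_step_le {m d : ℕ} {W : Matrix (Fin m) (Fin m) ℝ}
    (hm : m ≠ 0) (hrow : W *ᵥ (fun _ => (1 : ℝ)) = fun _ => 1)
    (hcol : (fun _ => (1 : ℝ)) ᵥ* W = fun _ => 1) {lam : ℝ} (hlam : 0 ≤ lam)
    (x u : Fin m → EuclideanSpace ℝ (Fin d)) :
    stackedNorm (consensusError fun i => ∑ j, W i j • (x j - lam • u j))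
      ≤ ‖Matrix.toEuclideanCLM (𝕜 := ℝ) (n := Fin m)
          (W - (m : ℝ)⁻¹ • Matrix.of (fun _ _ => (1 : ℝ)))‖
        * (stackedNorm (consensusError x) + lam * stackedNorm u) := by
  set M : Matrix (Fin m) (Fin m) ℝ := W - (m : ℝ)⁻¹ • Matrix.of (fun _ _ => (1 : ℝ))
  -- `M ⊗ I_d` annihilates `x̄ ⊗ 𝟏`, so `x` may be replaced by its consensus error.
  have hcenter : (fun i => ∑ j, M i j • (x j - lam • u j))
      = fun i => ∑ j, M i j • (consensusError x - lam • u) j := by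
    funext i
    simp only [consensusError, Pi.sub_apply, Pi.smul_apply, sub_right_comm _ _ (lam • u _)]
    exact (sum_smul_sub_const_of_sum_eq_zero (sum_sub_centering_eq_zero hrow hm i) _ _).symm
  calc stackedNorm (consensusError fun i => ∑ j, W i j • (x j - lam • u j))
      = stackedNorm (fun i => ∑ j, M i j • (consensusError x - lam • u) j) := by
        rw [consensusError_matrix_smul hcol, hcenter]
    _ ≤ ‖Matrix.toEuclideanCLM (𝕜 := ℝ) (n := Fin m) M‖
          * stackedNorm (consensusError x - lam • u) := stackedNorm_matrix_smul_le _ _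
    _ ≤ ‖Matrix.toEuclideanCLM (𝕜 := ℝ) (n := Fin m) M‖
          * (stackedNorm (consensusError x) + lam * stackedNorm u) := by
        gcongr
        calc _ ≤ stackedNorm (consensusError x) + stackedNorm (lam • u) := stackedNorm_sub_le _ _
          _ = _ := by rw [stackedNorm_smul, abs_of_nonneg hlam]

theorem unrolled_consensus_error_bound_general
    {m d : ℕ} (hm : 0 < m)
    (W : Matrix (Fin m) (Fin m) ℝ)
    (hWrow : W *ᵥ (fun _ => (1 : ℝ)) = fun _ => 1)
    (hWcol : (fun _ => (1 : ℝ)) ᵥ* W = fun _ => 1)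
    (η : ℝ)
    (hη : η = ‖Matrix.toEuclideanCLM (𝕜 := ℝ) (n := Fin m)
        (W - (m : ℝ)⁻¹ • Matrix.of (fun _ _ => (1 : ℝ)))‖)
    (lam : ℕ → ℝ) (hlam : ∀ k, 0 ≤ lam k)
    (u : ℕ → Fin m → EuclideanSpace ℝ (Fin d))
    (x : ℕ → Fin m → EuclideanSpace ℝ (Fin d))
    (hx : ∀ k i, x (k + 1) i = ∑ j, W i j • (x k j - lam k • u k j)) :
    ∀ k, stackedNorm (fun i => x (k + 1) i - (m : ℝ)⁻¹ • ∑ i', x (k + 1) i')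
      ≤ η ^ (k + 1) * stackedNorm (fun i => x 0 i - (m : ℝ)⁻¹ • ∑ i', x 0 i')
        + ∑ l ∈ Finset.range (k + 1), η ^ (k + 1 - l) * lam l * stackedNorm (u l) := by
  have hstep : ∀ k, stackedNorm (consensusError (x (k + 1)))
      ≤ η * (stackedNorm (consensusError (x k)) + lam k * stackedNorm (u k)) := fun k => by
    rw [funext (hx k), hη]
    exact stackedNorm_consensusError_step_le hm.ne' hWrow hWcol (hlam k) _ _
  have hη0 : 0 ≤ η := hη ▸ norm_nonneg _
  intro k
  simp only [mul_assoc]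
  exact le_pow_mul_add_sum_of_le_mul_add
    (a := fun k => stackedNorm (consensusError (x k))) hη0 hstep (k + 1)

/-- **Unrolled consensus-error bound**: for the dynamics
`x^{k+1} = (W ⊗ I_d)(x^k - λ^k u^k)` with `W` symmetric doubly stochastic and
`η = ‖W - (1/m)𝟙𝟙ᵀ‖`, one has for every `k`
`‖x^{k+1} - x̄^{k+1} ⊗ 𝟙‖ ≤ η^{k+1}‖x^0 - x̄^0 ⊗ 𝟙‖ + ∑_{l=0}^{k} η^{k+1-l} λ^l ‖u^l‖`. -/
theorem unrolled_consensus_error_bound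
    {m d : ℕ} (hm : 0 < m)
    (W : Matrix (Fin m) (Fin m) ℝ)
    (hWsymm : W.IsSymm)
    (hWnonneg : ∀ i j, 0 ≤ W i j)
    (hWrow : W *ᵥ (fun _ => (1 : ℝ)) = fun _ => 1)
    (hWcol : (fun _ => (1 : ℝ)) ᵥ* W = fun _ => 1)
    (η : ℝ)
    (hη : η = ‖Matrix.toEuclideanCLM (𝕜 := ℝ) (n := Fin m)
        (W - (m : ℝ)⁻¹ • Matrix.of (fun _ _ => (1 : ℝ)))‖)
    (lam : ℕ → ℝ) (hlam : ∀ k, 0 ≤ lam k)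
    (u : ℕ → Fin m → EuclideanSpace ℝ (Fin d))
    (x : ℕ → Fin m → EuclideanSpace ℝ (Fin d))
    (hx : ∀ k i, x (k + 1) i = ∑ j, W i j • (x k j - lam k • u k j)) :
    ∀ k, stackedNorm (fun i => x (k + 1) i - (m : ℝ)⁻¹ • ∑ i', x (k + 1) i')
      ≤ η ^ (k + 1) * stackedNorm (fun i => x 0 i - (m : ℝ)⁻¹ • ∑ i', x 0 i')
        + ∑ l ∈ Finset.range (k + 1), η ^ (k + 1 - l) * lam l * stackedNorm (u l) :=
  unrolled_consensus_error_bound_general hm W hWrow hWcol η hη lam hlam u x hx
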